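/- Consider M hypotheses with full-support distributions P_1,…,P_M on a finite alphabet X, and the nearest-neighbor test on sequences of length n that declares hypothesis argmin_j D(P_{x⃗}‖P_j). For any n-type P_{x⃗}, the error probability averaged over the type class (under any priors summing to 1) satisfies P(e | P_{x⃗}) ≤ 2^{-n(min_{i≠j} max{D(P_{x⃗}‖P_i), D(P_{x⃗}‖P_j)} - (log₂ M)/n)}. -/

import Mathlib

open Finset
open scoped Classical

/-- Empirical type of a sequence. -/
noncomputable def typeOf {α : Type*} [Fintype α] [DecidableEq α] {n : ℕ} (xv : Fin n → α) :
    α → ℝ :=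
  fun a => ((Finset.univ.filter fun i => xv i = a).card : ℝ) / n

/-- Base-2 KL divergence. -/
noncomputable def KL {α : Type*} [Fintype α] (P Q : α → ℝ) : ℝ :=
  ∑ x, P x * Real.logb 2 (P x / Q x)

/-!
A sequence `x` of type `T` has probability `∏ₖ T(xₖ) · 2^(-n D(T‖Q))` under any full-support `Q`.
If the nearest-neighbour test decides `j = d x` while the truth is `i ≠ j`, then
`D(T‖P_j) ≤ D(T‖P_i)`, so `D(T‖P_i) = max (D(T‖P_i)) (D(T‖P_j))` is at least the min-max value `E`.
Hence every term of the error sum over the type class is at most `∏ₖ T(xₖ) · 2^(-nE)`, and these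
weights add up to at most `(∑ₐ T a)^n = 1`; the `log₂ M / n` correction is pure slack.
-/

lemma sum_mul_logb_div_eq_neg_KL {α : Type*} [Fintype α] (P Q : α → ℝ) :
    ∑ a, P a * Real.logb 2 (Q a / P a) = -KL P Q := by
  simp only [KL, ← sum_neg_distrib, ← mul_neg, ← Real.logb_inv, inv_div]

section EmpiricalType

variable {α : Type*} [Fintype α] [DecidableEq α] {n : ℕ}

lemma typeOf_nonneg (xv : Fin n → α) (a : α) : 0 ≤ typeOf xv a := by
  unfold typeOf
  positivity

lemma typeOf_apply_self_pos (hn : 0 < n) (xv : Fin n → α) (k : Fin n) :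
    0 < typeOf xv (xv k) := by
  unfold typeOf
  have hk : k ∈ univ.filter fun i => xv i = xv k := by simp
  exact div_pos (by exact_mod_cast card_pos.mpr ⟨k, hk⟩) (by exact_mod_cast hn)

lemma sum_comp_eq_mul_sum_typeOf (xv : Fin n → α) (g : α → ℝ) :
    ∑ k, g (xv k) = n * ∑ a, typeOf xv a * g a := by
  rcases Nat.eq_zero_or_pos n with rfl | hn
  · simp
  rw [← sum_fiberwise' univ xv g, mul_sum]
  refine sum_congr rfl fun a _ => ?_
  rw [sum_const, nsmul_eq_mul, typeOf, ← mul_assoc, mul_div_cancel₀ _ (by positivity)]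

lemma sum_typeOf (hn : 0 < n) (xv : Fin n → α) : ∑ a, typeOf xv a = 1 := by
  have h := sum_comp_eq_mul_sum_typeOf xv 1
  simp only [Pi.one_apply, mul_one, sum_const, card_univ, Fintype.card_fin, nsmul_eq_mul] at h
  exact (mul_eq_left₀ (by positivity)).mp h.symm

lemma prod_eq_prod_typeOf_mul_rpow_KL (hn : 0 < n) (xv : Fin n → α) {Q : α → ℝ}
    (hQ : ∀ a, 0 < Q a) :
    ∏ k, Q (xv k) = (∏ k, typeOf xv (xv k)) * 2 ^ (-(n : ℝ) * KL (typeOf xv) Q) := by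
  set T := typeOf xv
  have hT := typeOf_apply_self_pos hn xv
  calc ∏ k, Q (xv k) = ∏ k, T (xv k) * 2 ^ Real.logb 2 (Q (xv k) / T (xv k)) := by
        refine prod_congr rfl fun k _ => ?_
        rw [Real.rpow_logb two_pos (by norm_num) (div_pos (hQ _) (hT k)),
          mul_div_cancel₀ _ (hT k).ne']
    _ = (∏ k, T (xv k)) * 2 ^ ∑ k, Real.logb 2 (Q (xv k) / T (xv k)) := by
        rw [prod_mul_distrib, Real.rpow_sum_of_pos two_pos]
    _ = (∏ k, T (xv k)) * 2 ^ (-(n : ℝ) * KL T Q) := by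
        rw [sum_comp_eq_mul_sum_typeOf xv fun a => Real.logb 2 (Q a / T a),
          sum_mul_logb_div_eq_neg_KL, mul_neg, neg_mul]

lemma prod_le_prod_typeOf_mul_rpow (hn : 0 < n) (xv : Fin n → α) {Q : α → ℝ}
    (hQ : ∀ a, 0 < Q a) {E : ℝ} (hE : E ≤ KL (typeOf xv) Q) :
    ∏ k, Q (xv k) ≤ (∏ k, typeOf xv (xv k)) * 2 ^ (-(n : ℝ) * E) := by
  rw [prod_eq_prod_typeOf_mul_rpow_KL hn xv hQ]
  refine mul_le_mul_of_nonneg_left (Real.rpow_le_rpow_of_exponent_le one_le_two ?_)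
    (prod_nonneg fun k _ => typeOf_nonneg _ _)
  exact mul_le_mul_of_nonpos_left hE (neg_nonpos.mpr (Nat.cast_nonneg n))

end EmpiricalType

lemma sum_prod_le_one_of_sum_eq_one {α : Type*} [Fintype α] {n : ℕ} {P : α → ℝ}
    (hP : ∀ a, 0 ≤ P a) (hP1 : ∑ a, P a = 1) (p : (Fin n → α) → Prop) [DecidablePred p] :
    ∑ xv : Fin n → α, (if p xv then ∏ k, P (xv k) else 0) ≤ 1 := by
  calc ∑ xv : Fin n → α, (if p xv then ∏ k, P (xv k) else 0)
      ≤ ∑ xv : Fin n → α, ∏ k, P (xv k) :=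
        sum_le_sum fun xv _ => by
          split_ifs
          exacts [le_rfl, prod_nonneg fun k _ => hP _]
    _ = 1 := by rw [← Fintype.sum_pow, hP1, one_pow]

lemma sum_mul_ite_le {ι : Type*} [Fintype ι] [DecidableEq ι] {w f : ι → ℝ} (hw : ∀ i, 0 ≤ w i)
    (hw1 : ∑ i, w i = 1) (j : ι) {B : ℝ} (hB : 0 ≤ B) (hf : ∀ i, j ≠ i → f i ≤ B) :
    ∑ i, w i * (if j = i then 0 else f i) ≤ B := by
  calc ∑ i, w i * (if j = i then 0 else f i) ≤ ∑ i, w i * B :=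
        sum_le_sum fun i _ => mul_le_mul_of_nonneg_left
          (by split_ifs with h; exacts [hB, hf i h]) (hw i)
    _ = B := by rw [← sum_mul, hw1, one_mul]

lemma sInf_pairwise_max_le {ι : Type*} [Finite ι] (f : ι → ℝ) {i j : ι} (hij : i ≠ j)
    (hji : f j ≤ f i) :
    sInf {y : ℝ | ∃ i j : ι, i ≠ j ∧ y = max (f i) (f j)} ≤ f i := by
  have hfin : {y : ℝ | ∃ i j : ι, i ≠ j ∧ y = max (f i) (f j)}.Finite :=
    (Set.finite_range fun p : ι × ι => max (f p.1) (f p.2)).subset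
      fun _ ⟨i, j, _, hy⟩ => ⟨(i, j), hy.symm⟩
  exact csInf_le hfin.bddBelow ⟨i, j, hij, (max_eq_left hji).symm⟩

theorem stmt14_general {α : Type*} [Fintype α] [DecidableEq α] {M n : ℕ} (hn : 0 < n)
    (Ps : Fin M → α → ℝ)
    (hpos : ∀ i x, 0 < Ps i x)
    (prior : Fin M → ℝ) (hprior : ∀ i, 0 < prior i) (hprior1 : ∑ i, prior i = 1)
    (d : (Fin n → α) → Fin M)
    (hd : ∀ (xv : Fin n → α) (j : Fin M),
      KL (typeOf xv) (Ps (d xv)) ≤ KL (typeOf xv) (Ps j))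
    (T : α → ℝ) (hT : ∃ xv : Fin n → α, typeOf xv = T) :
    (∑ xv : Fin n → α, if typeOf xv = T then
        ∑ i, prior i * (if d xv = i then 0 else ∏ k, Ps i (xv k)) else 0) ≤
      (2:ℝ) ^ (-(n:ℝ) *
        (sInf {y : ℝ | ∃ i j : Fin M, i ≠ j ∧ y = max (KL T (Ps i)) (KL T (Ps j))} -
          Real.logb 2 M / n)) := by
  obtain ⟨xv₀, rfl⟩ := hT
  set E := sInf {y : ℝ | ∃ i j : Fin M, i ≠ j ∧
    y = max (KL (typeOf xv₀) (Ps i)) (KL (typeOf xv₀) (Ps j))}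
  have hbound : ∀ xv, typeOf xv = typeOf xv₀ →
      ∑ i, prior i * (if d xv = i then 0 else ∏ k, Ps i (xv k)) ≤
        (∏ k, typeOf xv₀ (xv k)) * 2 ^ (-(n:ℝ) * E) := by
    intro xv hxv
    refine sum_mul_ite_le (fun i => (hprior i).le) hprior1 (d xv) ?_ fun i hi => ?_
    · exact mul_nonneg (prod_nonneg fun k _ => typeOf_nonneg _ _) (by positivity)
    have hE : E ≤ KL (typeOf xv₀) (Ps i) := sInf_pairwise_max_le _ hi.symm (hxv ▸ hd xv i)
    rw [← hxv] at hE ⊢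
    exact prod_le_prod_typeOf_mul_rpow hn xv (hpos i) hE
  calc _ ≤ ∑ xv : Fin n → α, (if typeOf xv = typeOf xv₀ then ∏ k, typeOf xv₀ (xv k) else 0) *
          2 ^ (-(n:ℝ) * E) :=
        sum_le_sum fun xv _ => by
          split_ifs with hxv
          exacts [hbound xv hxv, by rw [zero_mul]]
    _ ≤ 2 ^ (-(n:ℝ) * E) := by
        have hweights := sum_prod_le_one_of_sum_eq_one (typeOf_nonneg xv₀) (sum_typeOf hn xv₀)
            (fun xv : Fin n → α => typeOf xv = typeOf xv₀)
        rw [← sum_mul]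
        exact mul_le_of_le_one_left (by positivity) hweights
    _ ≤ _ := by
        refine Real.rpow_le_rpow_of_exponent_le one_le_two ?_
        have hlogM : 0 ≤ Real.logb 2 M :=
          div_nonneg (Real.log_natCast_nonneg M) (Real.log_nonneg one_le_two)
        have hcancel : (n:ℝ) * (Real.logb 2 M / n) = Real.logb 2 M :=
          mul_div_cancel₀ _ (Nat.cast_ne_zero.mpr hn.ne')
        linarith

theorem stmt14 {α : Type*} [Fintype α] [DecidableEq α] {M n : ℕ} (hM : 2 ≤ M) (hn : 0 < n)
    (Ps : Fin M → α → ℝ)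
    (hpos : ∀ i x, 0 < Ps i x) (hsum : ∀ i, ∑ x, Ps i x = 1)
    (hdist : ∀ i j, i ≠ j → Ps i ≠ Ps j)
    (prior : Fin M → ℝ) (hprior : ∀ i, 0 < prior i) (hprior1 : ∑ i, prior i = 1)
    (d : (Fin n → α) → Fin M)
    (hd : ∀ (xv : Fin n → α) (j : Fin M),
      KL (typeOf xv) (Ps (d xv)) ≤ KL (typeOf xv) (Ps j))
    (T : α → ℝ) (hT : ∃ xv : Fin n → α, typeOf xv = T) :
    (∑ xv : Fin n → α, if typeOf xv = T then
        ∑ i, prior i * (if d xv = i then 0 else ∏ k, Ps i (xv k)) else 0) ≤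
      (2:ℝ) ^ (-(n:ℝ) *
        (sInf {y : ℝ | ∃ i j : Fin M, i ≠ j ∧ y = max (KL T (Ps i)) (KL T (Ps j))} -
          Real.logb 2 M / n)) :=
  stmt14_general hn Ps hpos prior hprior hprior1 d hd T hT
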